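/- Let p ≥ 1 and let f_1, …, f_w be monotone norms on ℝⁿ, each differentiable at every point of the nonnegative orthant except the origin and each p-supermodular. Let p′ be any real with p′ ≥ max(p, log₂ w). Then M(x) := (∑_{i=1}^w f_i(x)^{p′})^{1/p′} is a monotone norm on ℝⁿ that is p′-supermodular and satisfies max_i f_i(x) ≤ M(x) ≤ 2·max_i f_i(x) for all x ∈ ℝⁿ with nonnegative coordinates. -/

import Mathlib

/-!
Monotonicity orders the four values `a = fᵢ(u)^p ≤ b = fᵢ(u+v)^p` and `a ≤ c = fᵢ(u+w)^p` of the
`p`-supermodularity inequality `c - a ≤ d - b`, `d = fᵢ(u+v+w)^p`, so that convexity of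
`t ↦ t^(p′/p)` turns it into `c^(p′/p) - a^(p′/p) ≤ d^(p′/p) - b^(p′/p)`. Each `fᵢ` is therefore
`p′`-supermodular, and so is `M` because `M^p′ = ∑ᵢ fᵢ^p′`. Minkowski's inequality makes `M` a
norm, and `max fᵢ ≤ M ≤ w^(1/p′) · max fᵢ ≤ 2 · max fᵢ` because `p′ ≥ log₂ w`.
-/

noncomputable section

/-- A monotone norm on ℝⁿ: subadditive, absolutely homogeneous, point-separating, and
monotone on the nonnegative orthant. -/
def IsMonotoneNorm {n : ℕ} (N : (Fin n → ℝ) → ℝ) : Prop :=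
  (∀ x y, N (x + y) ≤ N x + N y) ∧
  (∀ (c : ℝ) (x), N (c • x) = |c| * N x) ∧
  (∀ x, N x = 0 → x = 0) ∧
  (∀ x y : Fin n → ℝ, 0 ≤ x → x ≤ y → N x ≤ N y)

/-- `N` is `p`-supermodular: `N(u+v+w)^p − N(u+v)^p ≥ N(u+w)^p − N(u)^p` for all
nonnegative `u, v, w`. -/
def IsPSupermodular {n : ℕ} (N : (Fin n → ℝ) → ℝ) (p : ℝ) : Prop :=
  ∀ u v w : Fin n → ℝ, 0 ≤ u → 0 ≤ v → 0 ≤ w →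
    N (u + w) ^ p - N u ^ p ≤ N (u + v + w) ^ p - N (u + v) ^ p

open Finset

lemma ConvexOn.map_add_map_le_map_add_map {s : Set ℝ} {φ : ℝ → ℝ} (hφ : ConvexOn ℝ s φ)
    {a b c : ℝ} (ha : a ∈ s) (hd : b + c - a ∈ s) (hab : a ≤ b) (hac : a ≤ c) :
    φ b + φ c ≤ φ a + φ (b + c - a) := by
  obtain had | had := (show a ≤ b + c - a by linarith).eq_or_lt
  · obtain rfl : b = a := by linarith
    obtain rfl : c = b := by linarith
    simp
  -- `b` and `c` are the convex combinations of `a` and `b + c - a` with swapped weights.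
  set t := (b - a) / (b + c - a - a) with ht
  have hd0 : b + c - a - a ≠ 0 := by linarith
  have ht0 : 0 ≤ t := div_nonneg (by linarith) (by linarith)
  have ht1 : 0 ≤ 1 - t := by
    rw [ht, sub_nonneg, div_le_one (by linarith)]; linarith
  have hb : (1 - t) • a + t • (b + c - a) = b := by
    simp only [ht, smul_eq_mul]; field_simp; ring
  have hc : t • a + (1 - t) • (b + c - a) = c := by
    simp only [ht, smul_eq_mul]; field_simp; ring
  have h₁ := hφ.2 ha hd ht1 ht0 (by ring)
  have h₂ := hφ.2 ha hd ht0 ht1 (by ring)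
  rw [hb] at h₁
  rw [hc] at h₂
  simp only [smul_eq_mul] at h₁ h₂
  linear_combination h₁ + h₂

lemma rpow_add_rpow_le_of_sub_le {q a b c d : ℝ} (hq : 1 ≤ q) (ha : 0 ≤ a) (hab : a ≤ b)
    (hac : a ≤ c) (h : c - a ≤ d - b) : b ^ q + c ^ q ≤ a ^ q + d ^ q :=
  calc b ^ q + c ^ q ≤ a ^ q + (b + c - a) ^ q :=
        (convexOn_rpow hq).map_add_map_le_map_add_map ha (by simp only [Set.mem_Ici]; linarith)
          hab hac
    _ ≤ a ^ q + d ^ q := by gcongr <;> linarith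

lemma rpow_one_div_le_of_logb_le {b x q : ℝ} (hb : 1 < b) (hx : 0 < x) (hq : 0 < q)
    (h : Real.logb b x ≤ q) : x ^ (1 / q) ≤ b := by
  rw [one_div, Real.rpow_inv_le_iff_of_pos hx.le (by linarith) hq]
  exact (Real.logb_le_iff_le_rpow hb hx).1 h

namespace IsMonotoneNorm

variable {n : ℕ} {N : (Fin n → ℝ) → ℝ}

lemma map_zero (hN : IsMonotoneNorm N) : N 0 = 0 := by
  simpa using hN.2.1 0 0

lemma nonneg (hN : IsMonotoneNorm N) (x : Fin n → ℝ) : 0 ≤ N x := by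
  have h := hN.1 x (-x)
  rw [add_neg_cancel, hN.map_zero, ← neg_one_smul ℝ x, hN.2.1] at h
  simp only [abs_neg, abs_one, one_mul] at h
  linarith

lemma mono (hN : IsMonotoneNorm N) {x y : Fin n → ℝ} (hx : 0 ≤ x) (hxy : x ≤ y) : N x ≤ N y :=
  hN.2.2.2 x y hx hxy

end IsMonotoneNorm

lemma IsPSupermodular.mono {n : ℕ} {N : (Fin n → ℝ) → ℝ} {p q : ℝ} (hN : IsMonotoneNorm N)
    (h : IsPSupermodular N p) (hp : 0 < p) (hpq : p ≤ q) : IsPSupermodular N q := by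
  intro u v w hu hv hw
  have hpow : ∀ x, N x ^ q = (N x ^ p) ^ (q / p) := fun x => by
    rw [← Real.rpow_mul (hN.nonneg x), mul_div_cancel₀ _ hp.ne']
  have hmono : ∀ y, 0 ≤ y → N u ^ p ≤ N (u + y) ^ p := fun y hy =>
    Real.rpow_le_rpow (hN.nonneg u) (hN.mono hu (le_add_of_nonneg_right hy)) hp.le
  rw [hpow, hpow, hpow, hpow]
  linarith [rpow_add_rpow_le_of_sub_le ((one_le_div hp).2 hpq) (Real.rpow_nonneg (hN.nonneg u) p)
    (hmono v hv) (hmono w hw) (h u v w hu hv hw)]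

section lpCombination

variable {ι α : Type*} [Fintype ι]

def lpCombination (q : ℝ) (f : ι → α → ℝ) (x : α) : ℝ :=
  (∑ i, f i x ^ q) ^ (1 / q)

variable {q : ℝ} {f : ι → α → ℝ}

lemma lpCombination_nonneg {x : α} (hf : ∀ i, 0 ≤ f i x) : 0 ≤ lpCombination q f x :=
  Real.rpow_nonneg (sum_nonneg fun i _ => Real.rpow_nonneg (hf i) q) _

lemma lpCombination_rpow (hq : q ≠ 0) {x : α} (hf : ∀ i, 0 ≤ f i x) :
    lpCombination q f x ^ q = ∑ i, f i x ^ q := by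
  rw [lpCombination, one_div,
    Real.rpow_inv_rpow (sum_nonneg fun i _ => Real.rpow_nonneg (hf i) q) hq]

lemma le_lpCombination (hq : 0 < q) {x : α} (hf : ∀ i, 0 ≤ f i x) (j : ι) :
    f j x ≤ lpCombination q f x := by
  rw [← Real.rpow_le_rpow_iff (hf j) (lpCombination_nonneg hf) hq, lpCombination_rpow hq.ne' hf]
  exact single_le_sum (fun i _ => Real.rpow_nonneg (hf i) q) (mem_univ j)

lemma lpCombination_le_card_rpow_mul_iSup (hq : 0 < q) {x : α} (hf : ∀ i, 0 ≤ f i x) :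
    lpCombination q f x ≤ (Fintype.card ι : ℝ) ^ (1 / q) * ⨆ i, f i x := by
  have hsup : 0 ≤ ⨆ i, f i x := Real.iSup_nonneg hf
  calc lpCombination q f x ≤ (∑ _i : ι, (⨆ i, f i x) ^ q) ^ (1 / q) := by
        refine Real.rpow_le_rpow (sum_nonneg fun i _ => Real.rpow_nonneg (hf i) q)
          (sum_le_sum fun i _ => ?_) (by positivity)
        exact Real.rpow_le_rpow (hf i) (le_ciSup (Finite.bddAbove_range fun i => f i x) i) hq.le
    _ = (Fintype.card ι : ℝ) ^ (1 / q) * ⨆ i, f i x := by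
        rw [sum_const, card_univ, nsmul_eq_mul, Real.mul_rpow (by positivity) (by positivity),
          one_div, Real.rpow_rpow_inv hsup hq.ne']

end lpCombination

section

variable {ι : Type*} [Fintype ι] {n : ℕ} {q : ℝ} {f : ι → (Fin n → ℝ) → ℝ}

lemma IsPSupermodular.lpCombination (hq : q ≠ 0) (hf : ∀ i x, 0 ≤ f i x)
    (h : ∀ i, IsPSupermodular (f i) q) : IsPSupermodular (lpCombination q f) q := by
  intro u v w hu hv hw
  have hpow := fun x => lpCombination_rpow (f := f) hq (hf · x)
  simp only [hpow, ← sum_sub_distrib]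
  exact sum_le_sum fun i _ => h i u v w hu hv hw

lemma IsMonotoneNorm.lpCombination [Nonempty ι] (hq : 1 ≤ q) (hf : ∀ i, IsMonotoneNorm (f i)) :
    IsMonotoneNorm (lpCombination q f) := by
  have hq0 : 0 < q := by linarith
  have hnn : ∀ i x, 0 ≤ f i x := fun i => (hf i).nonneg
  have hsum : ∀ x, 0 ≤ ∑ i, f i x ^ q := fun x =>
    sum_nonneg fun i _ => Real.rpow_nonneg (hnn i x) q
  refine ⟨fun x y => ?_, fun c x => ?_, fun x hx => ?_, fun x y hx hxy => ?_⟩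
  · calc _root_.lpCombination q f (x + y) ≤ (∑ i, (f i x + f i y) ^ q) ^ (1 / q) := by
          refine Real.rpow_le_rpow (hsum _) (sum_le_sum fun i _ => ?_) (by positivity)
          exact Real.rpow_le_rpow (hnn i _) ((hf i).1 x y) hq0.le
      _ ≤ _ := Real.Lp_add_le_of_nonneg (s := univ) hq (fun i _ => hnn i x) fun i _ => hnn i y
  · have hM := lpCombination_nonneg (q := q) (hnn · x)
    rw [← Real.rpow_left_inj (lpCombination_nonneg (hnn · _)) (by positivity) hq0.ne',
      Real.mul_rpow (abs_nonneg c) hM, lpCombination_rpow hq0.ne' (hnn · _),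
      lpCombination_rpow hq0.ne' (hnn · _), mul_sum]
    simp only [(hf _).2.1, Real.mul_rpow (abs_nonneg c) (hnn _ _)]
  · obtain ⟨i⟩ := ‹Nonempty ι›
    exact (hf i).2.2.1 x (le_antisymm (hx ▸ le_lpCombination hq0 (hnn · x) i) (hnn i x))
  · refine Real.rpow_le_rpow (hsum x) (sum_le_sum fun i _ => ?_) (by positivity)
    exact Real.rpow_le_rpow (hnn i x) ((hf i).mono hx hxy) hq0.le

end

theorem max_of_pSupermodular_approx_general {n : ℕ} (p : ℝ) (hp : 1 ≤ p)
    (w : ℕ) (hw : 1 ≤ w) (f : Fin w → (Fin n → ℝ) → ℝ)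
    (hf : ∀ i, IsMonotoneNorm (f i))
    (hsup : ∀ i, IsPSupermodular (f i) p)
    (p' : ℝ) (hp' : max p (Real.logb 2 w) ≤ p') :
    IsMonotoneNorm (fun x : Fin n → ℝ => (∑ i, f i x ^ p') ^ (1 / p')) ∧
    IsPSupermodular (fun x : Fin n → ℝ => (∑ i, f i x ^ p') ^ (1 / p')) p' ∧
    ∀ x : Fin n → ℝ, 0 ≤ x →
      (⨆ i, f i x) ≤ (∑ i, f i x ^ p') ^ (1 / p') ∧
      (∑ i, f i x ^ p') ^ (1 / p') ≤ 2 * ⨆ i, f i x := by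
  have hpp' : p ≤ p' := (le_max_left _ _).trans hp'
  have hp'0 : 0 < p' := by linarith
  have hnn : ∀ i x, 0 ≤ f i x := fun i => (hf i).nonneg
  have : Nonempty (Fin w) := ⟨⟨0, hw⟩⟩
  refine ⟨IsMonotoneNorm.lpCombination (hp.trans hpp') hf,
    IsPSupermodular.lpCombination hp'0.ne' hnn
      fun i => (hsup i).mono (hf i) (by linarith) hpp',
    fun x _ => ⟨ciSup_le (le_lpCombination hp'0 (hnn · x)), ?_⟩⟩
  have hw2 : (w : ℝ) ^ (1 / p') ≤ 2 := rpow_one_div_le_of_logb_le one_lt_two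
    (by exact_mod_cast hw) hp'0 ((le_max_right _ _).trans hp')
  calc lpCombination p' f x ≤ (w : ℝ) ^ (1 / p') * ⨆ i, f i x := by
        simpa using lpCombination_le_card_rpow_mul_iSup hp'0 (hnn · x)
    _ ≤ 2 * ⨆ i, f i x := by gcongr; exact Real.iSup_nonneg (hnn · x)

/-- If `f₁, …, f_w` are differentiable `p`-supermodular monotone norms and
`p′ ≥ max(p, log₂ w)`, then the `ℓ_{p′}`-combination `(∑ᵢ fᵢ(x)^{p′})^{1/p′}` is a
`p′`-supermodular monotone norm that `2`-approximates `maxᵢ fᵢ`. -/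
theorem max_of_pSupermodular_approx {n : ℕ} (p : ℝ) (hp : 1 ≤ p)
    (w : ℕ) (hw : 1 ≤ w) (f : Fin w → (Fin n → ℝ) → ℝ)
    (hf : ∀ i, IsMonotoneNorm (f i))
    (hdiff : ∀ i, ∀ x : Fin n → ℝ, 0 ≤ x → x ≠ 0 → DifferentiableAt ℝ (f i) x)
    (hsup : ∀ i, IsPSupermodular (f i) p)
    (p' : ℝ) (hp' : max p (Real.logb 2 w) ≤ p') :
    IsMonotoneNorm (fun x : Fin n → ℝ => (∑ i, f i x ^ p') ^ (1 / p')) ∧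
    IsPSupermodular (fun x : Fin n → ℝ => (∑ i, f i x ^ p') ^ (1 / p')) p' ∧
    ∀ x : Fin n → ℝ, 0 ≤ x →
      (⨆ i, f i x) ≤ (∑ i, f i x ^ p') ^ (1 / p') ∧
      (∑ i, f i x ^ p') ^ (1 / p') ≤ 2 * ⨆ i, f i x :=
  max_of_pSupermodular_approx_general p hp w hw f hf hsup p' hp'
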